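/- Let x ∈ ℝ^d, let b : ℝ^d → ℝ^d be continuous, let k : ℝ^d → [0,∞) be bounded and continuous, and let (X_t)_{t ≥ 0} be an ℝ^d-valued process with continuous sample paths and X_0 = x almost surely, such that for every twice continuously differentiable compactly supported g : ℝ^d → ℝ and every t ≥ 0, E[g(X_t)] = g(x) + E[ ∫₀^t ((1/2)Δg + ⟨b, ∇g⟩)(X_s) ds ]. Then for every twice continuously differentiable compactly supported f : ℝ^d → ℝ, lim_{t → 0⁺} (1/t) ( E[ f(X_t) · exp(−∫₀^t k(X_s) ds) ] − f(x) ) = (1/2)Δf(x) + ⟨b(x), ∇f(x)⟩ − k(x)f(x). -/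

import Mathlib

open MeasureTheory Filter

noncomputable section

/-- Laplacian of `f : ℝ^d → ℝ` at `x`, computed as the trace of the second derivative. -/
def lap {d : ℕ} (f : EuclideanSpace ℝ (Fin d) → ℝ) (x : EuclideanSpace ℝ (Fin d)) : ℝ :=
  ∑ i, fderiv ℝ (fderiv ℝ f) x (EuclideanSpace.single i 1) (EuclideanSpace.single i 1)

/-!
Dynkin's formula turns `(E f(Xₜ) − f(x)) / t` into the time average
`E[(1/t) ∫₀ᵗ 𝒜₀f(Xₛ) ds]` of the bounded continuous function `𝒜₀f = ½Δf + ⟨b, ∇f⟩`, which tends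
to `𝒜₀f(x)` by path continuity and dominated convergence. The killing contributes
`E[f(Xₜ)(exp(−∫₀ᵗ k(Xₛ) ds) − 1) / t]`; since `|e⁻ᵃ − 1| ≤ a` for `a ≥ 0`, its integrand is
bounded by `sup|f| · sup k`, and pathwise it tends to `−k(x) f(x)`.
-/

open Topology

theorem tendsto_one_div_mul_sub_of_hasDerivAt {h : ℝ → ℝ} {c : ℝ} (hd : HasDerivAt h c 0) :
    Tendsto (fun t => (1 / t) * (h t - h 0)) (𝓝[>] 0) (𝓝 c) := by
  refine ((hasDerivAt_iff_tendsto_slope.1 hd).mono_left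
    (nhdsWithin_mono _ fun t (ht : 0 < t) => ht.ne')).congr fun t => ?_
  rw [slope_def_field]
  ring

theorem Continuous.tendsto_one_div_mul_intervalIntegral {g : ℝ → ℝ} (hg : Continuous g) :
    Tendsto (fun t => (1 / t) * ∫ s in (0 : ℝ)..t, g s) (𝓝[>] 0) (𝓝 (g 0)) := by
  simpa using tendsto_one_div_mul_sub_of_hasDerivAt
    (intervalIntegral.integral_hasDerivAt_right (hg.intervalIntegrable 0 0)
      (hg.stronglyMeasurableAtFilter _ _) hg.continuousAt)

theorem Continuous.tendsto_one_div_mul_exp_neg_intervalIntegral_sub_one {κ : ℝ → ℝ}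
    (hκ : Continuous κ) :
    Tendsto (fun t => (1 / t) * (Real.exp (-∫ s in (0 : ℝ)..t, κ s) - 1)) (𝓝[>] 0)
      (𝓝 (-κ 0)) := by
  have hK := intervalIntegral.integral_hasDerivAt_right (hκ.intervalIntegrable 0 0)
    (hκ.stronglyMeasurableAtFilter _ _) hκ.continuousAt
  simpa using tendsto_one_div_mul_sub_of_hasDerivAt hK.neg.exp

theorem norm_one_div_mul_intervalIntegral_le {g : ℝ → ℝ} {C t : ℝ} (hC : ∀ s, ‖g s‖ ≤ C)
    (ht : 0 < t) : ‖(1 / t) * ∫ s in (0 : ℝ)..t, g s‖ ≤ C := by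
  have hI := intervalIntegral.norm_integral_le_of_norm_le_const (a := 0) (b := t)
    fun s _ => hC s
  rw [sub_zero, abs_of_pos ht] at hI
  rw [norm_mul, Real.norm_of_nonneg (by positivity)]
  calc 1 / t * ‖∫ s in (0 : ℝ)..t, g s‖ ≤ 1 / t * (C * t) := by gcongr
    _ = C := by field_simp

theorem abs_exp_neg_sub_one_le {a : ℝ} (ha : 0 ≤ a) : |Real.exp (-a) - 1| ≤ a := by
  rw [abs_sub_comm, abs_of_nonneg (sub_nonneg.2 (Real.exp_le_one_iff.2 (neg_nonpos.2 ha)))]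
  linarith [Real.one_sub_le_exp_neg a]

theorem norm_one_div_mul_mul_exp_neg_sub_one_le {a K M C t : ℝ} (ht : 0 < t) (ha : ‖a‖ ≤ M)
    (hK0 : 0 ≤ K) (hKC : K ≤ C * t) : ‖(1 / t) * (a * (Real.exp (-K) - 1))‖ ≤ M * C := by
  have hM0 : 0 ≤ M := (norm_nonneg a).trans ha
  calc ‖(1 / t) * (a * (Real.exp (-K) - 1))‖ = ‖a‖ * |Real.exp (-K) - 1| / t := by
        rw [norm_mul, norm_mul, Real.norm_of_nonneg (by positivity : (0 : ℝ) ≤ 1 / t),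
          Real.norm_eq_abs (Real.exp _ - 1)]
        ring
    _ ≤ M * (C * t) / t := by
        gcongr
        exact (abs_exp_neg_sub_one_le hK0).trans hKC
    _ = M * C := by field_simp

theorem tendsto_integral_of_forall_norm_le {Ω G ι : Type*} [MeasurableSpace Ω]
    {P : Measure Ω} [IsProbabilityMeasure P] [NormedAddCommGroup G] [NormedSpace ℝ G]
    [CompleteSpace G]
    {l : Filter ι} [l.IsCountablyGenerated] {F : ι → Ω → G} {c : G} {C : ℝ}
    (hF : ∀ᶠ i in l, AEStronglyMeasurable (F i) P) (hC : ∀ᶠ i in l, ∀ ω, ‖F i ω‖ ≤ C)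
    (hlim : ∀ᵐ ω ∂P, Tendsto (F · ω) l (𝓝 c)) :
    Tendsto (fun i => ∫ ω, F i ω ∂P) l (𝓝 c) := by
  have := tendsto_integral_filter_of_dominated_convergence (fun _ => C) hF
    (hC.mono fun _ h => ae_of_all _ h) (integrable_const C) hlim
  rwa [integral_const, probReal_univ, one_smul] at this

theorem measurable_intervalIntegral_of_measurable_uncurry {Ω : Type*} [MeasurableSpace Ω]
    {F : ℝ → Ω → ℝ} (hF : Measurable (Function.uncurry F)) (a b : ℝ) :
    Measurable fun ω => ∫ s in a..b, F s ω :=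
  (hF.stronglyMeasurable.integral_prod_left (μ := volume.restrict (Set.Ioc a b))).measurable.sub
    (hF.stronglyMeasurable.integral_prod_left (μ := volume.restrict (Set.Ioc b a))).measurable

section PathIntegrals

variable {Ω E : Type*} [MeasurableSpace Ω] {P : Measure Ω} [IsProbabilityMeasure P]
  [TopologicalSpace E] [MeasurableSpace E] [OpensMeasurableSpace E] {X : ℝ → Ω → E} {x : E}

theorem tendsto_one_div_mul_integral_sub_of_dynkin {g A : E → ℝ} {C : ℝ} (hA : Continuous A)
    (hAC : ∀ y, ‖A y‖ ≤ C) (hX : Measurable (Function.uncurry X))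
    (hXcont : ∀ ω, Continuous fun s => X s ω) (hX0 : ∀ᵐ ω ∂P, X 0 ω = x)
    (hD : ∀ t, 0 ≤ t →
      ∫ ω, g (X t ω) ∂P = g x + ∫ ω, (∫ s in (0 : ℝ)..t, A (X s ω)) ∂P) :
    Tendsto (fun t => (1 / t) * (∫ ω, g (X t ω) ∂P - g x)) (𝓝[>] 0) (𝓝 (A x)) := by
  have hmean : Tendsto (fun t => ∫ ω, (1 / t) * (∫ s in (0 : ℝ)..t, A (X s ω)) ∂P) (𝓝[>] 0)
      (𝓝 (A x)) :=
    tendsto_integral_of_forall_norm_le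
      (Eventually.of_forall fun t => ((measurable_intervalIntegral_of_measurable_uncurry
        (F := fun s ω => A (X s ω)) (hA.measurable.comp hX) 0 t).const_mul
          _).aestronglyMeasurable)
      (eventually_mem_nhdsWithin.mono fun _ ht _ =>
        norm_one_div_mul_intervalIntegral_le (fun _ => hAC _) ht)
      (hX0.mono fun ω hω => by
        simpa [hω] using (hA.comp (hXcont ω)).tendsto_one_div_mul_intervalIntegral)
  refine hmean.congr' (eventually_mem_nhdsWithin.mono fun t (ht : 0 < t) => ?_)
  dsimp only
  rw [integral_const_mul, hD t ht.le, add_sub_cancel_left]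

theorem tendsto_one_div_mul_integral_mul_exp_neg_sub {f k : E → ℝ} {M C : ℝ}
    (hf : Continuous f) (hfM : ∀ y, ‖f y‖ ≤ M) (hk : Continuous k) (hk0 : ∀ y, 0 ≤ k y)
    (hkC : ∀ y, k y ≤ C) (hX : Measurable (Function.uncurry X))
    (hXcont : ∀ ω, Continuous fun s => X s ω) (hX0 : ∀ᵐ ω ∂P, X 0 ω = x) :
    Tendsto (fun t => (1 / t) * (∫ ω, f (X t ω) * Real.exp (-∫ s in (0 : ℝ)..t, k (X s ω)) ∂P -
      ∫ ω, f (X t ω) ∂P)) (𝓝[>] 0) (𝓝 (-(k x * f x))) := by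
  set K : ℝ → Ω → ℝ := fun t ω => ∫ s in (0 : ℝ)..t, k (X s ω)
  have hfX : ∀ t, Measurable fun ω => f (X t ω) := fun t =>
    hf.measurable.comp (hX.comp measurable_prodMk_left)
  have hK : ∀ t, Measurable (K t) :=
    measurable_intervalIntegral_of_measurable_uncurry (F := fun s ω => k (X s ω))
      (hk.measurable.comp hX) 0
  have hK0 : ∀ t, 0 ≤ t → ∀ ω, 0 ≤ K t ω := fun t ht ω =>
    intervalIntegral.integral_nonneg ht fun s _ => hk0 _
  have hKC : ∀ t, 0 ≤ t → ∀ ω, K t ω ≤ C * t := fun t ht ω => by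
    have hI := intervalIntegral.norm_integral_le_of_norm_le_const (a := 0) (b := t)
      fun s _ => (Real.norm_of_nonneg (hk0 (X s ω))).trans_le (hkC _)
    rw [sub_zero, abs_of_nonneg ht] at hI
    exact (Real.le_norm_self _).trans hI
  have hlim : Tendsto (fun t => ∫ ω, (1 / t) * (f (X t ω) * (Real.exp (-K t ω) - 1)) ∂P)
      (𝓝[>] 0) (𝓝 (-(k x * f x))) := by
    refine tendsto_integral_of_forall_norm_le (C := M * C)
      (Eventually.of_forall fun t => (measurable_const.mul ((hfX t).mul
        ((hK t).neg.exp.sub measurable_const))).aestronglyMeasurable)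
      (eventually_mem_nhdsWithin.mono fun t (ht : 0 < t) ω =>
        norm_one_div_mul_mul_exp_neg_sub_one_le ht (hfM _) (hK0 t ht.le ω) (hKC t ht.le ω))
      (hX0.mono fun ω hω => ?_)
    have hfX0 : Tendsto (fun t => f (X t ω)) (𝓝[>] 0) (𝓝 (f x)) := by
      simpa [hω, Function.comp_def] using
        ((hf.comp (hXcont ω)).tendsto 0).mono_left nhdsWithin_le_nhds
    have hexp := (hk.comp (hXcont ω)).tendsto_one_div_mul_exp_neg_intervalIntegral_sub_one
    simp only [Function.comp_apply, hω] at hexp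
    convert hfX0.mul hexp using 2 <;> ring
  refine hlim.congr' (eventually_mem_nhdsWithin.mono fun t (ht : 0 < t) => ?_)
  have hexp_le : ∀ ω, ‖Real.exp (-K t ω)‖ ≤ 1 := fun ω => by
    rw [Real.norm_of_nonneg (Real.exp_nonneg _), Real.exp_le_one_iff, neg_nonpos]
    exact hK0 t ht.le ω
  have hIf : Integrable (fun ω => f (X t ω)) P :=
    .of_bound (hfX t).aestronglyMeasurable M (ae_of_all _ fun _ => hfM _)
  have hIfe : Integrable (fun ω => f (X t ω) * Real.exp (-K t ω)) P :=
    hIf.mul_bdd (hK t).neg.exp.aestronglyMeasurable (ae_of_all _ hexp_le)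
  show _ = 1 / t * (∫ ω, f (X t ω) * Real.exp (-K t ω) ∂P - ∫ ω, f (X t ω) ∂P)
  rw [integral_const_mul, ← integral_sub hIfe hIf]
  simp only [mul_sub, mul_one]

end PathIntegrals

section Generator

variable {d : ℕ}

def diffusionGenerator (b : EuclideanSpace ℝ (Fin d) → EuclideanSpace ℝ (Fin d))
    (f : EuclideanSpace ℝ (Fin d) → ℝ) (y : EuclideanSpace ℝ (Fin d)) : ℝ :=
  (1 / 2) * lap f y + inner ℝ (b y) (gradient f y)

variable {b : EuclideanSpace ℝ (Fin d) → EuclideanSpace ℝ (Fin d)}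
  {f : EuclideanSpace ℝ (Fin d) → ℝ}

theorem ContDiff.continuous_lap (hf : ContDiff ℝ 2 f) : Continuous (lap f) :=
  continuous_finsetSum _ fun _ _ =>
    (((hf.fderiv_right (m := 1) le_rfl).continuous_fderiv one_ne_zero).clm_apply
      continuous_const).clm_apply continuous_const

theorem HasCompactSupport.lap (hf : HasCompactSupport f) : HasCompactSupport (lap f) :=
  (hf.fderiv (𝕜 := ℝ)).fderiv (𝕜 := ℝ) |>.mono fun y hy h => hy (by simp [_root_.lap, h])

theorem ContDiff.continuous_gradient (hf : ContDiff ℝ 2 f) : Continuous (gradient f) :=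
  (InnerProductSpace.toDual ℝ _).symm.continuous.comp (hf.continuous_fderiv two_ne_zero)

theorem HasCompactSupport.gradient (hf : HasCompactSupport f) :
    HasCompactSupport (gradient f) :=
  (hf.fderiv (𝕜 := ℝ)).mono fun y hy h => hy (by simp [_root_.gradient, h])

theorem ContDiff.continuous_diffusionGenerator (hb : Continuous b) (hf : ContDiff ℝ 2 f) :
    Continuous (diffusionGenerator b f) :=
  (continuous_const.mul hf.continuous_lap).add (hb.inner hf.continuous_gradient)

theorem HasCompactSupport.diffusionGenerator (hf : HasCompactSupport f) :
    HasCompactSupport (diffusionGenerator b f) :=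
  hf.lap.mul_left.add <| hf.gradient.mono fun y hy h => hy (by simp [h])

end Generator

theorem feynman_kac_generator {d : ℕ} {Ω : Type*} [MeasurableSpace Ω]
    (P : Measure Ω) [IsProbabilityMeasure P]
    (x : EuclideanSpace ℝ (Fin d))
    (b : EuclideanSpace ℝ (Fin d) → EuclideanSpace ℝ (Fin d)) (hb : Continuous b)
    (k : EuclideanSpace ℝ (Fin d) → ℝ) (hk : Continuous k) (hk0 : ∀ y, 0 ≤ k y)
    (hkbdd : ∃ C, ∀ y, k y ≤ C)
    (X : ℝ → Ω → EuclideanSpace ℝ (Fin d))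
    (hXmeas : ∀ t, Measurable (X t))
    (hXcont : ∀ ω, Continuous (fun s => X s ω))
    (hX0 : ∀ᵐ ω ∂P, X 0 ω = x)
    (hDynkin : ∀ g : EuclideanSpace ℝ (Fin d) → ℝ, ContDiff ℝ 2 g → HasCompactSupport g →
      ∀ t : ℝ, 0 ≤ t →
      ∫ ω, g (X t ω) ∂P =
        g x + ∫ ω, (∫ s in (0:ℝ)..t,
          (1 / 2) * lap g (X s ω) + (inner ℝ (b (X s ω)) (gradient g (X s ω)) : ℝ)) ∂P) :
    ∀ f : EuclideanSpace ℝ (Fin d) → ℝ, ContDiff ℝ 2 f → HasCompactSupport f →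
      Tendsto
        (fun t : ℝ => (1 / t) *
          ((∫ ω, f (X t ω) * Real.exp (-(∫ s in (0:ℝ)..t, k (X s ω))) ∂P) - f x))
        (nhdsWithin 0 (Set.Ioi 0))
        (nhds ((1 / 2) * lap f x + (inner ℝ (b x) (gradient f x) : ℝ) - k x * f x)) := by
  intro f hf hfc
  obtain ⟨Ck, hCk⟩ := hkbdd
  obtain ⟨M, hM⟩ := hfc.exists_bound_of_continuous hf.continuous
  have hA := hf.continuous_diffusionGenerator hb
  obtain ⟨CA, hCA⟩ := (hfc.diffusionGenerator (b := b)).exists_bound_of_continuous hA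
  have hX := measurable_uncurry_of_continuous_of_measurable hXcont hXmeas
  have hdrift := tendsto_one_div_mul_integral_sub_of_dynkin hA hCA hX hXcont hX0
    (hDynkin f hf hfc)
  have hkill := tendsto_one_div_mul_integral_mul_exp_neg_sub (P := P) hf.continuous hM hk hk0
    hCk hX hXcont hX0
  convert hdrift.add hkill using 2 with t
  · ring
  · simp only [diffusionGenerator]
    ring
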